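/- For every integer m ≥ 0, the polynomial Q(2^{2m+1}−1)(x) is congruent to 1 − x + 2x^{2^{2m}}·(1−δ_{m,0}) − S_{2m}(x)² + 2x·S^o_m(x) modulo 4, where δ_{m,0} equals 1 if m=0 and 0 otherwise, i.e. every coefficient of the difference is divisible by 4. -/
import Mathlib


open Polynomial

/-- The Thue–Morse ±1 sequence: t 0 = 1, t (2n) = t n, t (2n+1) = -t n. -/
def tmSeq : ℕ → ℤ
  | 0 => 1
  | n + 1 => if (n + 1) % 2 = 0 then tmSeq ((n + 1) / 2) else -tmSeq ((n + 1) / 2)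
decreasing_by all_goals exact Nat.div_lt_self (Nat.succ_pos n) one_lt_two

/-- Numerators of the convergents of the Thue–Morse continued fraction. -/
noncomputable def Ptm : ℕ → ℤ[X]
  | 0 => 1
  | 1 => 1
  | n + 2 => Ptm (n + 1) + C (tmSeq (n + 2)) * X * Ptm n

/-- Denominators of the convergents of the Thue–Morse continued fraction. -/
noncomputable def Qtm : ℕ → ℤ[X]
  | 0 => 1
  | 1 => 1 - X
  | n + 2 => Qtm (n + 1) + C (tmSeq (n + 2)) * X * Qtm n

/-- S_m(x) = Σ_{j<m} x^(2^j). -/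
noncomputable def Spoly (m : ℕ) : ℤ[X] := ∑ j ∈ Finset.range m, X ^ (2 ^ j)
/-- S^e_m(x) = Σ_{j<m} x^(2^(2j)). -/
noncomputable def SePoly (m : ℕ) : ℤ[X] := ∑ j ∈ Finset.range m, X ^ (2 ^ (2 * j))
/-- S^o_m(x) = Σ_{j<m} x^(2^(2j+1)). -/
noncomputable def SoPoly (m : ℕ) : ℤ[X] := ∑ j ∈ Finset.range m, X ^ (2 ^ (2 * j + 1))

lemma tmSeq_zero : tmSeq 0 = 1 := by rw [tmSeq]
lemma tmSeq_two_mul (n : ℕ) : tmSeq (2 * n) = tmSeq n := by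
  cases n with
  | zero => rfl
  | succ j =>
    rw [show 2 * (j+1) = (2*j+1)+1 by ring, tmSeq]
    have h1 : (2*j+1+1) % 2 = 0 := by omega
    have h2 : (2*j+1+1) / 2 = j+1 := by omega
    rw [h1, h2]; simp
lemma tmSeq_two_mul_add_one (n : ℕ) : tmSeq (2 * n + 1) = -tmSeq n := by
  rw [show 2*n+1 = (2*n)+1 by ring, tmSeq]
  have h1 : (2*n+1) % 2 = 1 := by omega
  have h2 : (2*n+1) / 2 = n := by omega
  rw [h1, h2]; simp
lemma tmSeq_flip : ∀ k j, j < 2^k → tmSeq (2^k + j) = -tmSeq j := by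
  intro k
  induction k with
  | zero =>
    intro j hj
    have hj0 : j = 0 := by omega
    subst hj0
    show tmSeq (2^0+0) = -tmSeq 0
    rw [show 2^0+0 = 2*0+1 by norm_num, tmSeq_two_mul_add_one]
  | succ k ih =>
    intro j hj
    rcases Nat.even_or_odd j with ⟨q, hq⟩ | ⟨q, hq⟩
    · have hq2 : q < 2^k := by subst hq; rw [pow_succ] at hj; omega
      have : 2^(k+1) + j = 2 * (2^k + q) := by subst hq; rw [pow_succ]; ring
      rw [this, tmSeq_two_mul, ih q hq2, hq, show q+q = 2*q by ring, tmSeq_two_mul]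
    · have hq2 : q < 2^k := by subst hq; rw [pow_succ] at hj; omega
      have : 2^(k+1) + j = 2 * (2^k + q) + 1 := by subst hq; rw [pow_succ]; ring
      rw [this, tmSeq_two_mul_add_one, ih q hq2, hq, tmSeq_two_mul_add_one]
noncomputable def negX : ℤ[X] →+* ℤ[X] := eval₂RingHom C (-X)
lemma negX_X : negX X = -X := eval₂_X _ _
lemma negX_C (a : ℤ) : negX (C a) = C a := eval₂_C _ _
lemma negX_pow_two_pow (i : ℕ) (hi : 1 ≤ i) : negX (X ^ (2^i)) = X ^ (2^i) := by
  rw [map_pow, negX_X, neg_pow, Even.neg_one_pow, one_mul]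
  exact (Nat.even_pow' (by omega)).mpr even_two
abbrev M2 := Matrix (Fin 2) (Fin 2) ℤ[X]
noncomputable def Tmat (n : ℕ) : M2 := !![1, C (tmSeq n) * X; 1, 0]
noncomputable def Pr : ℕ → ℕ → M2
  | _, 0 => 1
  | a, L+1 => Tmat (a+L) * Pr a L
lemma Pr_split (a L1 L2 : ℕ) : Pr a (L1+L2) = Pr (a+L1) L2 * Pr a L1 := by
  induction L2 with
  | zero => simp [Pr]
  | succ L ih => rw [show L1+(L+1) = (L1+L)+1 from rfl, Pr, Pr, ih, show a+L1+L = a+(L1+L) by ring, mul_assoc]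
lemma Tmat_map (n : ℕ) : (Tmat n).map negX = !![1, C (-tmSeq n) * X; 1, 0] := by
  ext i j
  fin_cases i <;> fin_cases j <;>
    simp [Tmat, Matrix.map_apply, negX_X, negX_C, map_mul, map_neg]
lemma Pr_flip (L : ℕ) : ∀ a, (∀ j, j < L → tmSeq (a+j) = -tmSeq j) →
    Pr a L = (Pr 0 L).map negX := by
  induction L with
  | zero =>
    intro a _
    show (1 : M2) = (1 : M2).map negX
    rw [Matrix.map_one _ (map_zero negX) (map_one negX)]
  | succ L ih =>
    intro a h
    have hmap : (Tmat L * Pr 0 L).map negX = (Tmat L).map negX * (Pr 0 L).map negX := by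
      exact Matrix.map_mul
    rw [Pr, Pr, show (0:ℕ)+L = L by ring, hmap, Tmat_map,
      ih a (fun j hj => h j (by omega))]
    congr 1
    unfold Tmat
    rw [h L (by omega)]
lemma Pr_double (k : ℕ) : Pr 0 (2^(k+1)) = (Pr 0 (2^k)).map negX * Pr 0 (2^k) := by
  rw [show 2^(k+1) = 2^k + 2^k by rw [pow_succ]; ring, Pr_split 0 (2^k) (2^k)]
  congr 1
  refine Pr_flip (2^k) (0+2^k) (fun j hj => ?_)
  rw [show 0+2^k+j = 2^k + j by ring]
  exact tmSeq_flip k j hj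
lemma tmSeq_one : tmSeq 1 = -1 := by
  rw [show (1:ℕ) = 2*0+1 by norm_num, tmSeq_two_mul_add_one, tmSeq_zero]
lemma Qtm_rec (n : ℕ) : Qtm (n+2) = Qtm (n+1) + C (tmSeq (n+2)) * X * Qtm n := by rw [Qtm]
lemma Ptm_rec (n : ℕ) : Ptm (n+2) = Ptm (n+1) + C (tmSeq (n+2)) * X * Ptm n := by rw [Ptm]
lemma Pr_QP (n : ℕ) : Pr 0 (n+2) = !![Qtm (n+1), X * Ptm (n+1); Qtm n, X * Ptm n] := by
  induction n with
  | zero =>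
    show Tmat (0+1) * (Tmat (0+0) * 1) = _
    rw [mul_one]
    refine Matrix.ext fun i j => ?_
    fin_cases i <;> fin_cases j <;>
      simp [Tmat, Matrix.mul_apply, Fin.sum_univ_two, tmSeq_zero, tmSeq_one,
        show Qtm 1 = 1 - X by rw [Qtm], show Qtm 0 = 1 by rw [Qtm],
        show Ptm 1 = 1 by rw [Ptm], show Ptm 0 = 1 by rw [Ptm]] <;> ring
  | succ n ih =>
    show Tmat (0+(n+2)) * Pr 0 (n+2) = _
    rw [ih, show 0+(n+2) = n+2 by ring,
      show Qtm (n+1+1) = Qtm (n+1) + C (tmSeq (n+2)) * X * Qtm n from Qtm_rec n,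
      show Ptm (n+1+1) = Ptm (n+1) + C (tmSeq (n+2)) * X * Ptm n from Ptm_rec n]
    refine Matrix.ext fun i j => ?_
    fin_cases i <;> fin_cases j <;>
      simp [Tmat, Matrix.mul_apply, Fin.sum_univ_two] <;> ring
lemma Spoly_zero : Spoly 0 = 0 := Finset.sum_range_zero _
lemma Spoly_succ (n : ℕ) : Spoly (n+1) = Spoly n + X ^ (2^n) := Finset.sum_range_succ _ _
lemma SePoly_zero : SePoly 0 = 0 := Finset.sum_range_zero _
lemma SePoly_succ (n : ℕ) : SePoly (n+1) = SePoly n + X ^ (2^(2*n)) := Finset.sum_range_succ _ _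
lemma SoPoly_zero : SoPoly 0 = 0 := Finset.sum_range_zero _
lemma SoPoly_succ (n : ℕ) : SoPoly (n+1) = SoPoly n + X ^ (2^(2*n+1)) := Finset.sum_range_succ _ _
lemma Spoly_split (m : ℕ) : Spoly (2*m+1) = SePoly (m+1) + SoPoly m ∧
    Spoly (2*m+2) = SePoly (m+1) + SoPoly (m+1) := by
  induction m with
  | zero =>
    constructor
    · rw [show 2*0+1 = 1 by norm_num, Spoly_succ, Spoly_zero, SePoly_succ, SePoly_zero, SoPoly_zero]
      norm_num
    · rw [show 2*0+2 = 2 by norm_num, show (2:ℕ) = 1+1 from rfl, Spoly_succ, Spoly_succ,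
        Spoly_zero, SePoly_succ, SePoly_zero, SoPoly_succ, SoPoly_zero]
      norm_num
  | succ m ih =>
    have h1 : Spoly (2*(m+1)+1) = SePoly (m+2) + SoPoly (m+1) := by
      rw [show 2*(m+1)+1 = (2*m+2)+1 by ring, Spoly_succ, ih.2,
        show SePoly (m+2) = SePoly (m+1) + X ^ (2^(2*(m+1))) from SePoly_succ (m+1),
        show 2*m+2 = 2*(m+1) by ring]
      ring
    refine ⟨h1, ?_⟩
    rw [show 2*(m+1)+2 = (2*(m+1)+1)+1 by ring, Spoly_succ, h1,
      show SoPoly (m+2) = SoPoly (m+1) + X ^ (2^(2*(m+1)+1)) from SoPoly_succ (m+1)]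
    ring
lemma Spoly_sq (n : ℕ) : ∃ h : ℤ[X], Spoly n * Spoly n = Spoly (n+1) - X + 2*h := by
  induction n with
  | zero => exact ⟨0, by rw [Spoly_zero, Spoly_succ, Spoly_zero]; ring⟩
  | succ n ih =>
    obtain ⟨h, hh⟩ := ih
    refine ⟨h + Spoly n * X^(2^n), ?_⟩
    rw [Spoly_succ, show Spoly (n+1+1) = Spoly (n+1) + X^(2^(n+1)) from Spoly_succ (n+1),
      show (X:ℤ[X])^(2^(n+1)) = X^(2^n) * X^(2^n) by rw [← pow_add, pow_succ]; ring_nf]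
    linear_combination hh
lemma negX_Spoly (n : ℕ) : negX (Spoly (n+1)) = Spoly (n+1) - 2*X := by
  induction n with
  | zero => rw [Spoly_succ, Spoly_zero, zero_add, pow_zero, pow_one, negX_X]; ring
  | succ n ih =>
    rw [show Spoly (n+1+1) = Spoly (n+1) + X^(2^(n+1)) from Spoly_succ (n+1), map_add, ih,
      negX_pow_two_pow (n+1) (by omega)]
    ring
lemma negX_SePoly (m : ℕ) : negX (SePoly (m+1)) = SePoly (m+1) - 2*X := by
  induction m with
  | zero =>
    rw [SePoly_succ, SePoly_zero, zero_add, show 2*0 = 0 by norm_num, pow_zero, pow_one, negX_X]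
    ring
  | succ m ih =>
    rw [show SePoly (m+1+1) = SePoly (m+1) + X^(2^(2*(m+1))) from SePoly_succ (m+1), map_add, ih,
      negX_pow_two_pow (2*(m+1)) (by omega)]
    ring
lemma negX_SoPoly (m : ℕ) : negX (SoPoly m) = SoPoly m := by
  induction m with
  | zero => rw [SoPoly_zero, map_zero]
  | succ m ih => rw [SoPoly_succ, map_add, ih, negX_pow_two_pow (2*m+1) (by omega)]
lemma stepEA {R : Type*} [CommRing R] (x s y T U h : R) (hs : s = T + U)
    (hsq : s*s = s + y - x + 2*h) :
    (4:R) ∣ ((1 - x + 2*(s-2*x) + (s-2*x)^2 + 2*(-x)*(T-2*x)) * (1 + x + 2*s + s^2 + 2*x*T) + (-x + 2*(-x)*U) * (1 + 2*s)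
      - (1 + x + 2*(s+y) + (s+y)^2 + 2*x*(U+y))) :=
  ⟨5*h + h^2 + 3*U + 3*U*h + 3*T + 3*T*h + 2*y + y*h + y*U + y*T + (-4)*x + (-9)*x*h + (-10)*x*U + (-2)*x*U*h + (-1)*x*U^2 + (-9)*x*T + (-2)*x*T*h + (-1)*x*T*U + (-5)*x*y + (-1)*x*y*U + (-1)*x*y*T + 5*x^2 + 4*x^2*h + 6*x^2*U + 3*x^2*T + (-2)*x^2*T*U + (-3)*x^2*T^2 + 2*x^2*y + 4*x^3*T, by linear_combination (10 + 2*h + y + 5*s + s^2 + (-17)*x + (-4)*x*s + 8*x^2) * hsq + (12 + 12*h + 4*y + (-36)*x + (-8)*x*h + (-4)*x*U + (-4)*x*y + 24*x^2 + (-8)*x^2*T) * hs⟩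
lemma stepEB {R : Type*} [CommRing R] (x s y T U h : R) (hs : s = T + U)
    (hsq : s*s = s + y - x + 2*h) :
    (4:R) ∣ ((1 - x + 2*(s-2*x) + (s-2*x)^2 + 2*(-x)*(T-2*x)) * (x + 2*x*U) + (-x + 2*(-x)*U) * (x + s^2 + 2*x*T)
      - (x + 2*x*(T+x))) :=
  ⟨x*U + x*U^2 + x*T*U + (-2)*x^2 + (-4)*x^2*U + (-2)*x^2*U^2 + (-2)*x^2*T + (-4)*x^2*T*U + 2*x^3 + 4*x^3*U, by linear_combination (0) * hsq + (2*x + 4*x*U + (-4)*x^2 + (-8)*x^2*U) * hs⟩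
lemma stepEC {R : Type*} [CommRing R] (x s y T U h : R) (hs : s = T + U)
    (hsq : s*s = s + y - x + 2*h) :
    (4:R) ∣ ((1 + 2*(s-2*x)) * (1 + x + 2*s + s^2 + 2*x*T) + (-x + (s-2*x)^2 + 2*(-x)*(T-2*x)) * (1 + 2*s)
      - (1 + 2*(s+y) + 2*x)) :=
  ⟨5*h + 3*U + 2*U*h + 3*T + 2*T*h + 2*y + y*U + y*T + (-4)*x + (-6)*x*h + (-7)*x*U + (-7)*x*T + (-3)*x*y + 4*x^2 + 4*x^2*U + 2*x^2*T, by linear_combination (10 + 4*s + (-12)*x) * hsq + (12 + 8*h + 4*y + (-28)*x + 16*x^2) * hs⟩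
lemma stepED {R : Type*} [CommRing R] (x s y T U h : R) (hs : s = T + U)
    (hsq : s*s = s + y - x + 2*h) :
    (4:R) ∣ ((1 + 2*(s-2*x)) * (x + 2*x*U) + (-x + (s-2*x)^2 + 2*(-x)*(T-2*x)) * (x + s^2 + 2*x*T)
      - (x + (s+y)^2 + 2*x*(U+y))) :=
  ⟨h^2 + U*h + T*h + y*h + (-3)*x*h + (-1)*x*U + (-2)*x*U*h + x*U^2 + (-1)*x*T + (-2)*x*T*h + x*T*U + (-2)*x*y + (-1)*x*y*U + (-1)*x*y*T + 4*x^2*h + x^2*T + (-2)*x^2*T*U + (-3)*x^2*T^2 + 2*x^2*y + 4*x^3*T, by linear_combination (2*h + y + s + s^2 + (-5)*x + (-4)*x*s + 8*x^2) * hsq + (4*h + (-4)*x + (-8)*x*h + 4*x*U + (-4)*x*y + 8*x^2 + (-8)*x^2*T) * hs⟩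
lemma stepOA {R : Type*} [CommRing R] (x s y T U h : R) (hs : s = T + U - x)
    (hsq : s*s = s + y - x + 2*h) :
    (4:R) ∣ ((1 - x + 2*(s-2*x) + (s-2*x)^2 + 2*(-x)*T) * (1 + x + 2*s + s^2 + 2*x*T) + (-x + 2*(-x)*(U-4*x)) * (1 + 2*s + 2*x)
      - (1 + x + 2*(s+y) + (s+y)^2 + 2*x*(U-x+y))) :=
  ⟨5*h + h^2 + 3*U + 3*U*h + 3*T + 3*T*h + 2*y + y*h + y*U + y*T + (-7)*x + (-12)*x*h + (-10)*x*U + (-2)*x*U*h + (-1)*x*U^2 + (-9)*x*T + (-2)*x*T*h + (-1)*x*T*U + (-6)*x*y + (-1)*x*y*U + (-1)*x*y*T + 15*x^2 + 4*x^2*h + 7*x^2*U + 4*x^2*T + (-2)*x^2*T*U + (-3)*x^2*T^2 + 2*x^2*y + (-3)*x^3 + 4*x^3*T, by linear_combination (10 + 2*h + y + 5*s + s^2 + (-17)*x + (-4)*x*s + 4*x^2) * hsq + (12 + 12*h + 4*y + (-36)*x + (-8)*x*h + (-4)*x*U + (-4)*x*y + 28*x^2 + (-8)*x^2*T) * hs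⟩
lemma stepOB {R : Type*} [CommRing R] (x s y T U h : R) (hs : s = T + U - x)
    (hsq : s*s = s + y - x + 2*h) :
    (4:R) ∣ ((1 - x + 2*(s-2*x) + (s-2*x)^2 + 2*(-x)*T) * (x + 2*x*U) + (-x + 2*(-x)*(U-4*x)) * (x + s^2 + 2*x*T)
      - (x + 2*x*T)) :=
  ⟨x*U + x*U^2 + x*T*U + (-2)*x^2 + 4*x^2*h + (-3)*x^2*U + (-2)*x^2*U^2 + (-4)*x^2*T*U + 2*x^2*y + 4*x^3*U + 4*x^3*T, by linear_combination (8*x^2) * hsq + (2*x + 4*x*U + 4*x^2 + (-8)*x^2*U) * hs⟩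
lemma stepOC {R : Type*} [CommRing R] (x s y T U h : R) (hs : s = T + U - x)
    (hsq : s*s = s + y - x + 2*h) :
    (4:R) ∣ ((1 + 2*(s-2*x) + 2*(-x)) * (1 + x + 2*s + s^2 + 2*x*T) + (-x + (s-2*x)^2 + 2*(-x)*T) * (1 + 2*s + 2*x)
      - (1 + 2*(s+y))) :=
  ⟨5*h + 3*U + 2*U*h + 3*T + 2*T*h + 2*y + y*U + y*T + (-7)*x + (-8)*x*h + (-8)*x*U + (-8)*x*T + (-4)*x*y + 10*x^2 + (-4)*x^2*T + 2*x^3, by linear_combination (10 + 4*s + (-12)*x) * hsq + (12 + 8*h + 4*y + (-32)*x) * hs⟩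
lemma stepOD {R : Type*} [CommRing R] (x s y T U h : R) (hs : s = T + U - x)
    (hsq : s*s = s + y - x + 2*h) :
    (4:R) ∣ ((1 + 2*(s-2*x) + 2*(-x)) * (x + 2*x*U) + (-x + (s-2*x)^2 + 2*(-x)*T) * (x + s^2 + 2*x*T)
      - (x + (s+y)^2 + 2*x*(U-x+y))) :=
  ⟨h^2 + U*h + T*h + y*h + (-4)*x*h + (-1)*x*U + (-2)*x*U*h + x*U^2 + (-1)*x*T + (-2)*x*T*h + x*T*U + (-2)*x*y + (-1)*x*y*U + (-1)*x*y*T + x^2 + 4*x^2*h + (-3)*x^2*U + (-2)*x^2*T*U + (-3)*x^2*T^2 + 2*x^2*y + (-1)*x^3 + 4*x^3*T, by linear_combination (2*h + y + s + s^2 + (-5)*x + (-4)*x*s + 4*x^2) * hsq + (4*h + (-4)*x + (-8)*x*h + 4*x*U + (-4)*x*y + 4*x^2 + (-8)*x^2*T) * hs⟩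
noncomputable def FEa (j : ℕ) : ℤ[X] :=
  (1 + X + 2*Spoly (2*j+1) + Spoly (2*j+1)^2 + 2*X*SePoly (j+1))
noncomputable def FEb (j : ℕ) : ℤ[X] := (X + 2*X*SoPoly j)
noncomputable def FEc (j : ℕ) : ℤ[X] := (1 + 2*Spoly (2*j+1))
noncomputable def FEd (j : ℕ) : ℤ[X] := (X + Spoly (2*j+1)^2 + 2*X*SePoly (j+1))
noncomputable def FOa (j : ℕ) : ℤ[X] :=
  (1 + X + 2*Spoly (2*j+2) + Spoly (2*j+2)^2 + 2*X*SoPoly (j+1))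
noncomputable def FOb (j : ℕ) : ℤ[X] := (X + 2*X*(SePoly (j+1) + X))
noncomputable def FOc (j : ℕ) : ℤ[X] := (1 + 2*Spoly (2*j+2) + 2*X)
noncomputable def FOd (j : ℕ) : ℤ[X] := (X + Spoly (2*j+2)^2 + 2*X*SoPoly (j+1))
def Cong4 (M : M2) (a b c d : ℤ[X]) : Prop :=
  (4:ℤ[X]) ∣ M 0 0 - a ∧ (4:ℤ[X]) ∣ M 0 1 - b ∧ (4:ℤ[X]) ∣ M 1 0 - c ∧ (4:ℤ[X]) ∣ M 1 1 - d
lemma dvd_mul_sub {R : Type*} [CommRing R] {r a b a' b' : R}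
    (ha : r ∣ a - a') (hb : r ∣ b - b') : r ∣ a*b - a'*b' := by
  obtain ⟨u, hu⟩ := ha
  obtain ⟨v, hv⟩ := hb
  exact ⟨a*v + u*b', by linear_combination a*hv + b'*hu⟩
lemma dvd_trans_sub {R : Type*} [CommRing R] {r a b c : R}
    (h1 : r ∣ a - b) (h2 : r ∣ b - c) : r ∣ a - c := by
  have := dvd_add h1 h2
  rwa [sub_add_sub_cancel] at this
lemma negX_cong {p q : ℤ[X]} (h : (4:ℤ[X]) ∣ p - q) : (4:ℤ[X]) ∣ negX p - negX q := by
  obtain ⟨c, hc⟩ := h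
  refine ⟨negX c, ?_⟩
  rw [← map_sub, hc, map_mul, map_ofNat]
lemma entry00 (M : M2) : (M.map negX * M) 0 0 = negX (M 0 0) * M 0 0 + negX (M 0 1) * M 1 0 := by
  rw [Matrix.mul_apply, Fin.sum_univ_two]; rfl
lemma entry01 (M : M2) : (M.map negX * M) 0 1 = negX (M 0 0) * M 0 1 + negX (M 0 1) * M 1 1 := by
  rw [Matrix.mul_apply, Fin.sum_univ_two]; rfl
lemma entry10 (M : M2) : (M.map negX * M) 1 0 = negX (M 1 0) * M 0 0 + negX (M 1 1) * M 1 0 := by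
  rw [Matrix.mul_apply, Fin.sum_univ_two]; rfl
lemma entry11 (M : M2) : (M.map negX * M) 1 1 = negX (M 1 0) * M 0 1 + negX (M 1 1) * M 1 1 := by
  rw [Matrix.mul_apply, Fin.sum_univ_two]; rfl
lemma negX_FEa (j : ℕ) : negX (FEa j) =
    (1 - X + 2*(Spoly (2*j+1)-2*X) + (Spoly (2*j+1)-2*X)^2 + 2*(-X)*(SePoly (j+1)-2*X)) := by
  simp only [FEa, map_add, map_mul, map_pow, map_one, map_ofNat, negX_X,
    negX_Spoly (2*j), negX_SePoly j]
  try ring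
lemma negX_FEb (j : ℕ) : negX (FEb j) = (-X + 2*(-X)*SoPoly j) := by
  simp only [FEb, map_add, map_mul, map_ofNat, negX_X, negX_SoPoly j]
  try ring
lemma negX_FEc (j : ℕ) : negX (FEc j) = (1 + 2*(Spoly (2*j+1)-2*X)) := by
  simp only [FEc, map_add, map_mul, map_one, map_ofNat, negX_Spoly (2*j)]
  try ring
lemma negX_FEd (j : ℕ) : negX (FEd j) =
    (-X + (Spoly (2*j+1)-2*X)^2 + 2*(-X)*(SePoly (j+1)-2*X)) := by
  simp only [FEd, map_add, map_mul, map_pow, map_ofNat, negX_X,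
    negX_Spoly (2*j), negX_SePoly j]
  try ring
lemma negX_FOa (j : ℕ) : negX (FOa j) =
    (1 - X + 2*(Spoly (2*j+2)-2*X) + (Spoly (2*j+2)-2*X)^2 + 2*(-X)*SoPoly (j+1)) := by
  simp only [FOa, map_add, map_mul, map_pow, map_one, map_ofNat, negX_X,
    negX_Spoly (2*j+1), negX_SoPoly (j+1)]
  try ring
lemma negX_FOb (j : ℕ) : negX (FOb j) = (-X + 2*(-X)*((SePoly (j+1) + X)-4*X)) := by
  simp only [FOb, map_add, map_mul, map_ofNat, negX_X, negX_SePoly j]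
  try ring
lemma negX_FOc (j : ℕ) : negX (FOc j) = (1 + 2*(Spoly (2*j+2)-2*X) + 2*(-X)) := by
  simp only [FOc, map_add, map_mul, map_one, map_ofNat, negX_X, negX_Spoly (2*j+1)]
  try ring
lemma negX_FOd (j : ℕ) : negX (FOd j) =
    (-X + (Spoly (2*j+2)-2*X)^2 + 2*(-X)*SoPoly (j+1)) := by
  simp only [FOd, map_add, map_mul, map_pow, map_ofNat, negX_X,
    negX_Spoly (2*j+1), negX_SoPoly (j+1)]
  try ring
lemma dvd_add_sub {R : Type*} [CommRing R] {r a b a' b' : R}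
    (h1 : r ∣ a - a') (h2 : r ∣ b - b') : r ∣ (a + b) - (a' + b') := by
  have := dvd_add h1 h2
  rwa [show a - a' + (b - b') = (a + b) - (a' + b') by ring] at this
lemma evenToOdd (j : ℕ) (hE : Cong4 (Pr 0 (2^(2*j+2))) (FEa j) (FEb j) (FEc j) (FEd j)) :
    Cong4 (Pr 0 (2^(2*j+3))) (FOa j) (FOb j) (FOc j) (FOd j) := by
  obtain ⟨h, hsq⟩ := Spoly_sq (2*j+1)
  rw [Spoly_succ (2*j+1)] at hsq
  have hs : Spoly (2*j+1) = SePoly (j+1) + SoPoly j := (Spoly_split j).1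
  obtain ⟨h1, h2, h3, h4⟩ := hE
  set M := Pr 0 (2^(2*j+2)) with hM
  have hdd : Pr 0 (2^(2*j+3)) = M.map negX * M := by
    rw [show 2*j+3 = (2*j+2)+1 from rfl]; exact Pr_double (2*j+2)
  have hSp2 : Spoly (2*j+2) = Spoly (2*j+1) + X^(2^(2*j+1)) := Spoly_succ (2*j+1)
  have hSo2 : SoPoly (j+1) = SoPoly j + X^(2^(2*j+1)) := SoPoly_succ j
  have hSe2 : SePoly (j+1) + X = SePoly (j+1) + X := rfl
  refine ⟨?_, ?_, ?_, ?_⟩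
  · rw [hdd, entry00]
    refine dvd_trans_sub (dvd_add_sub (dvd_mul_sub (negX_cong h1) h1) (dvd_mul_sub (negX_cong h2) h3)) ?_
    rw [negX_FEa, negX_FEb]
    simp only [FEa, FEb, FEc, FOa]
    rw [hSp2, hSo2]
    exact stepEA X (Spoly (2*j+1)) (X^(2^(2*j+1))) (SePoly (j+1)) (SoPoly j) h hs hsq
  · rw [hdd, entry01]
    refine dvd_trans_sub (dvd_add_sub (dvd_mul_sub (negX_cong h1) h2) (dvd_mul_sub (negX_cong h2) h4)) ?_
    rw [negX_FEa, negX_FEb]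
    simp only [FEb, FEd, FOb]
    exact stepEB X (Spoly (2*j+1)) (X^(2^(2*j+1))) (SePoly (j+1)) (SoPoly j) h hs hsq
  · rw [hdd, entry10]
    refine dvd_trans_sub (dvd_add_sub (dvd_mul_sub (negX_cong h3) h1) (dvd_mul_sub (negX_cong h4) h3)) ?_
    rw [negX_FEc, negX_FEd]
    simp only [FEa, FEc, FOc]
    rw [hSp2]
    exact stepEC X (Spoly (2*j+1)) (X^(2^(2*j+1))) (SePoly (j+1)) (SoPoly j) h hs hsq
  · rw [hdd, entry11]
    refine dvd_trans_sub (dvd_add_sub (dvd_mul_sub (negX_cong h3) h2) (dvd_mul_sub (negX_cong h4) h4)) ?_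
    rw [negX_FEc, negX_FEd]
    simp only [FEb, FEd, FOd]
    rw [hSp2, hSo2]
    exact stepED X (Spoly (2*j+1)) (X^(2^(2*j+1))) (SePoly (j+1)) (SoPoly j) h hs hsq
lemma oddToEven (j : ℕ) (hO : Cong4 (Pr 0 (2^(2*j+3))) (FOa j) (FOb j) (FOc j) (FOd j)) :
    Cong4 (Pr 0 (2^(2*(j+1)+2))) (FEa (j+1)) (FEb (j+1)) (FEc (j+1)) (FEd (j+1)) := by
  obtain ⟨h, hsq⟩ := Spoly_sq (2*j+2)
  rw [Spoly_succ (2*j+2)] at hsq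
  have hs : Spoly (2*j+2) = SoPoly (j+1) + (SePoly (j+1) + X) - X := by
    have := (Spoly_split j).2
    rw [this]; ring
  obtain ⟨h1, h2, h3, h4⟩ := hO
  set M := Pr 0 (2^(2*j+3)) with hM
  have hdd : Pr 0 (2^(2*(j+1)+2)) = M.map negX * M := by
    rw [show 2*(j+1)+2 = (2*j+3)+1 by ring]; exact Pr_double (2*j+3)
  have hSp2 : Spoly (2*(j+1)+1) = Spoly (2*j+2) + X^(2^(2*j+2)) := by
    rw [show 2*(j+1)+1 = (2*j+2)+1 by ring]; exact Spoly_succ (2*j+2)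
  have hSe2 : SePoly (j+1+1) = (SePoly (j+1) + X) - X + X^(2^(2*j+2)) := by
    rw [SePoly_succ (j+1), show 2*(j+1) = 2*j+2 by ring]; ring
  refine ⟨?_, ?_, ?_, ?_⟩
  · rw [hdd, entry00]
    refine dvd_trans_sub (dvd_add_sub (dvd_mul_sub (negX_cong h1) h1) (dvd_mul_sub (negX_cong h2) h3)) ?_
    rw [negX_FOa, negX_FOb]
    simp only [FOa, FOb, FOc, FEa]
    rw [hSp2, hSe2]
    exact stepOA X (Spoly (2*j+2)) (X^(2^(2*j+2))) (SoPoly (j+1)) (SePoly (j+1) + X) h hs hsq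
  · rw [hdd, entry01]
    refine dvd_trans_sub (dvd_add_sub (dvd_mul_sub (negX_cong h1) h2) (dvd_mul_sub (negX_cong h2) h4)) ?_
    rw [negX_FOa, negX_FOb]
    simp only [FOb, FOd, FEb]
    exact stepOB X (Spoly (2*j+2)) (X^(2^(2*j+2))) (SoPoly (j+1)) (SePoly (j+1) + X) h hs hsq
  · rw [hdd, entry10]
    refine dvd_trans_sub (dvd_add_sub (dvd_mul_sub (negX_cong h3) h1) (dvd_mul_sub (negX_cong h4) h3)) ?_
    rw [negX_FOc, negX_FOd]
    simp only [FOa, FOc, FEc]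
    rw [hSp2]
    exact stepOC X (Spoly (2*j+2)) (X^(2^(2*j+2))) (SoPoly (j+1)) (SePoly (j+1) + X) h hs hsq
  · rw [hdd, entry11]
    refine dvd_trans_sub (dvd_add_sub (dvd_mul_sub (negX_cong h3) h2) (dvd_mul_sub (negX_cong h4) h4)) ?_
    rw [negX_FOc, negX_FOd]
    simp only [FOb, FOd, FEd]
    rw [hSp2, hSe2]
    exact stepOD X (Spoly (2*j+2)) (X^(2^(2*j+2))) (SoPoly (j+1)) (SePoly (j+1) + X) h hs hsq
lemma tmSeq_two : tmSeq 2 = -1 := by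
  rw [show (2:ℕ) = 2*1 by norm_num, tmSeq_two_mul, tmSeq_one]
lemma tmSeq_three : tmSeq 3 = 1 := by
  rw [show (3:ℕ) = 2*1+1 by norm_num, tmSeq_two_mul_add_one, tmSeq_one]; norm_num
lemma Qtm_two : Qtm 2 = 1 - 2*X := by
  have h := Qtm_rec 0
  norm_num at h
  rw [h, show Qtm 1 = 1 - X by rw [Qtm], show Qtm 0 = 1 by rw [Qtm], tmSeq_two]
  simp [map_neg]
  try ring
lemma Qtm_three : Qtm 3 = 1 - X - X^2 := by
  have h := Qtm_rec 1
  norm_num at h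
  rw [h, Qtm_two, show Qtm 1 = 1 - X by rw [Qtm], tmSeq_three]
  simp
  try ring
lemma Ptm_two : Ptm 2 = 1 - X := by
  have h := Ptm_rec 0
  norm_num at h
  rw [h, show Ptm 1 = 1 by rw [Ptm], show Ptm 0 = 1 by rw [Ptm], tmSeq_two]
  simp [map_neg]
  try ring
lemma Ptm_three : Ptm 3 = 1 := by
  have h := Ptm_rec 1
  norm_num at h
  rw [h, Ptm_two, show Ptm 1 = 1 by rw [Ptm], tmSeq_three]
  simp
  try ring
lemma Spoly_one : Spoly 1 = X := by
  rw [show (1:ℕ) = 0+1 from rfl, Spoly_succ, Spoly_zero]; norm_num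
lemma SePoly_one : SePoly 1 = X := by
  rw [show (1:ℕ) = 0+1 from rfl, SePoly_succ, SePoly_zero]; norm_num
lemma baseCase : Cong4 (Pr 0 (2^(2*0+2))) (FEa 0) (FEb 0) (FEc 0) (FEd 0) := by
  rw [show (2:ℕ)^(2*0+2) = 2+2 by norm_num, Pr_QP 2]
  have e00 : (!![Qtm 3, X*Ptm 3; Qtm 2, X*Ptm 2] : M2) 0 0 = Qtm 3 := rfl
  have e01 : (!![Qtm 3, X*Ptm 3; Qtm 2, X*Ptm 2] : M2) 0 1 = X*Ptm 3 := rfl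
  have e10 : (!![Qtm 3, X*Ptm 3; Qtm 2, X*Ptm 2] : M2) 1 0 = Qtm 2 := rfl
  have e11 : (!![Qtm 3, X*Ptm 3; Qtm 2, X*Ptm 2] : M2) 1 1 = X*Ptm 2 := rfl
  have hS1 : Spoly (2*0+1) = X := by norm_num [Spoly_one]
  have hSe1 : SePoly (0+1) = X := by norm_num [SePoly_one]
  refine ⟨?_, ?_, ?_, ?_⟩
  · rw [e00, Qtm_three]
    simp only [FEa]
    rw [hS1, hSe1]
    exact ⟨-X - X^2, by ring⟩
  · rw [e01, Ptm_three]
    simp only [FEb]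
    rw [SoPoly_zero]
    exact ⟨0, by ring⟩
  · rw [e10, Qtm_two]
    simp only [FEc]
    rw [hS1]
    exact ⟨-X, by ring⟩
  · rw [e11, Ptm_two]
    simp only [FEd]
    rw [hS1, hSe1]
    exact ⟨-X^2, by ring⟩
lemma mainCong : ∀ j, Cong4 (Pr 0 (2^(2*j+3))) (FOa j) (FOb j) (FOc j) (FOd j) := by
  intro j
  induction j with
  | zero => exact evenToOdd 0 baseCase
  | succ j ih => exact evenToOdd (j+1) (oddToEven j ih)

/-- Q(2^(2m+1)−1)(x) ≡ 1 − x + 2x^(2^(2m))·(1−δ_{m,0}) − S_{2m}(x)² + 2x·S^o_m(x) (mod 4). -/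
theorem Qtm_pow_odd_sub_one_mod_four (m : ℕ) :
    ∀ k, (4 : ℤ) ∣ (Qtm (2 ^ (2 * m + 1) - 1)
      - (1 - X + 2 * X ^ (2 ^ (2 * m)) * (1 - if m = 0 then 1 else 0)
          - Spoly (2 * m) ^ 2 + 2 * X * SoPoly m)).coeff k := by
  have key : (4:ℤ[X]) ∣ (Qtm (2 ^ (2 * m + 1) - 1)
      - (1 - X + 2 * X ^ (2 ^ (2 * m)) * (1 - if m = 0 then 1 else 0)
          - Spoly (2 * m) ^ 2 + 2 * X * SoPoly m)) := by
    cases m with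
    | zero =>
      rw [if_pos rfl, show 2^(2*0+1) - 1 = 1 by norm_num, show Qtm 1 = 1 - X by rw [Qtm],
        show 2*0 = 0 from rfl, Spoly_zero, SoPoly_zero]
      exact ⟨0, by ring⟩
    | succ j =>
      have h1 := (mainCong j).1
      have hge : (8:ℕ) ≤ 2^(2*j+3) := by
        calc (8:ℕ) = 2^3 := by norm_num
        _ ≤ 2^(2*j+3) := Nat.pow_le_pow_right (by norm_num) (by omega)
      have hQ : Pr 0 (2^(2*j+3)) 0 0 = Qtm (2^(2*j+3) - 1) := by
        obtain ⟨K, hK⟩ : ∃ K, 2^(2*j+3) = K + 2 := ⟨2^(2*j+3) - 2, by omega⟩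
        rw [hK, Pr_QP K]
        show Qtm (K+1) = Qtm (K + 2 - 1)
        congr 1
      rw [hQ] at h1
      have h2 : (4:ℤ[X]) ∣ FOa j - (1 - X + 2 * X ^ (2 ^ (2 * (j+1))) * (1 - if j+1 = 0 then 1 else 0)
          - Spoly (2 * (j+1)) ^ 2 + 2 * X * SoPoly (j+1)) := by
        obtain ⟨h, hsq⟩ := Spoly_sq (2*j+2)
        rw [Spoly_succ (2*j+2)] at hsq
        simp only [FOa, if_neg (Nat.succ_ne_zero j), show 2*(j+1) = 2*j+2 by ring]
        exact ⟨Spoly (2*j+2) + h, by linear_combination 2*hsq⟩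
      have := dvd_trans_sub h1 h2
      rwa [show 2*(j+1)+1 = 2*j+3 by ring]
  intro k
  obtain ⟨c, hc⟩ := key
  refine ⟨c.coeff k, ?_⟩
  rw [hc, show (4:ℤ[X]) = C (4:ℤ) from (map_ofNat C 4).symm, coeff_C_mul]
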